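/- arXiv:2001.05107 — 5 statements merged into one kernel-verified Lean document; each statement's English description precedes it below -/
import Mathlib

section
/- Soundness of the lexicographic fitness function GCF_fal: if GCF_fal(u) = B·⌈(B−1)·T₁(f₁(u))⌉ + (B−1)·T₂(f₂(u)) equals 0, where B > 1, T₁, T₂ are as defined (nonnegative, T₁(r) = 0 iff r ≤ 0, T₂(r) = 0 iff r < 0), then f₁(u) ≤ 0 and f₂(u) < 0. -/
noncomputable def T1 (Rmax : ℝ) (r : ℝ) : ℝ := if r < 0 then 0 else r / Rmax

noncomputable def T2 (Rmax ε : ℝ) (r : ℝ) : ℝ :=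
  if r < 0 then 0 else if r = 0 then ε else r / Rmax

/-- The lexicographic fitness function `GCF_fal`. -/
noncomputable def GCFfal (B Rmax₁ Rmax₂ ε : ℝ) (a b : ℝ) : ℝ :=
  B * (⌈(B - 1) * T1 Rmax₁ a⌉ : ℝ) + (B - 1) * T2 Rmax₂ ε b

theorem GCFfal_sound (B Rmax₁ Rmax₂ ε : ℝ) (hB : 1 < B)
    (hR₁ : 0 < Rmax₁) (hR₂ : 0 < Rmax₂) (hε : 0 < ε) (a b : ℝ)
    (h : GCFfal B Rmax₁ Rmax₂ ε a b = 0) : a ≤ 0 ∧ b < 0 := by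
  have hB1 : (0:ℝ) < B - 1 := by linarith
  have hT1 : 0 ≤ T1 Rmax₁ a := by
    unfold T1; split
    · exact le_refl 0
    · exact div_nonneg (not_lt.mp ‹¬ a < 0›) hR₁.le
  have hT2 : 0 ≤ T2 Rmax₂ ε b := by
    unfold T2; split
    · exact le_refl 0
    · split
      · exact hε.le
      · have hb : 0 ≤ b := not_lt.mp ‹¬ b < 0›
        exact div_nonneg hb hR₂.le
  have harg : 0 ≤ (B - 1) * T1 Rmax₁ a := mul_nonneg hB1.le hT1
  have hceil : (0:ℤ) ≤ ⌈(B - 1) * T1 Rmax₁ a⌉ := Int.ceil_nonneg harg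
  have hceilR : (0:ℝ) ≤ (⌈(B - 1) * T1 Rmax₁ a⌉ : ℝ) := by exact_mod_cast hceil
  have h1 : 0 ≤ B * (⌈(B - 1) * T1 Rmax₁ a⌉ : ℝ) := mul_nonneg (by linarith) hceilR
  have h2 : 0 ≤ (B - 1) * T2 Rmax₂ ε b := mul_nonneg hB1.le hT2
  unfold GCFfal at h
  have hz1 : B * (⌈(B - 1) * T1 Rmax₁ a⌉ : ℝ) = 0 := by linarith
  have hz2 : (B - 1) * T2 Rmax₂ ε b = 0 := by linarith
  have hcz : (⌈(B - 1) * T1 Rmax₁ a⌉ : ℝ) = 0 := by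
    rcases mul_eq_zero.mp hz1 with h' | h'
    · linarith
    · exact h'
  have hcz' : ⌈(B - 1) * T1 Rmax₁ a⌉ = 0 := by exact_mod_cast hcz
  have hle : (B - 1) * T1 Rmax₁ a ≤ 0 := by
    have := Int.ceil_le.mp hcz'.le
    simpa using this
  have hT1z : T1 Rmax₁ a = 0 := le_antisymm (nonpos_of_mul_nonpos_right hle hB1 |>.trans (le_refl _)) hT1
  have hT2z : T2 Rmax₂ ε b = 0 := by
    rcases mul_eq_zero.mp hz2 with h' | h'
    · linarith
    · exact h'
  constructor
  · by_contra ha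
    push_neg at ha
    have : T1 Rmax₁ a = a / Rmax₁ := by unfold T1; rw [if_neg (by linarith)]
    rw [this] at hT1z
    have := div_pos ha hR₁
    linarith
  · by_contra hb
    push_neg at hb
    rcases eq_or_lt_of_le hb with h' | h'
    · have : T2 Rmax₂ ε b = ε := by
        unfold T2; rw [if_neg (by linarith), if_pos h'.symm]
      linarith [this ▸ hT2z]
    · have : T2 Rmax₂ ε b = b / Rmax₂ := by
        unfold T2; rw [if_neg (by linarith), if_neg (by linarith)]
      rw [this] at hT2z
      have := div_pos h' hR₂
      linarith
end

section
/- Prioritization property of the lexicographic fitness function: for all inputs u, v with f₁(u) > 0 and f₁(v) ≤ 0 (i.e., u violates the constraint and v satisfies it), assuming f₁(u) ≤ Rmax₁ and f₂(v) ≤ Rmax₂, we have GCF_fal(u) > GCF_fal(v). -/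
theorem GCFfal_prioritization (B Rmax₁ Rmax₂ ε : ℝ) (hB : 2 ≤ B)
    (hR₁ : 0 < Rmax₁) (hR₂ : 0 < Rmax₂) (hε : 0 < ε) (hε1 : ε ≤ 1)
    (a₁ b₁ a₂ b₂ : ℝ) (ha₁ : 0 < a₁) (ha₁' : a₁ ≤ Rmax₁)
    (hb₁ : 0 ≤ b₁) (ha₂ : a₂ ≤ 0) (hb₂ : b₂ ≤ Rmax₂) :
    GCFfal B Rmax₁ Rmax₂ ε a₂ b₂ < GCFfal B Rmax₁ Rmax₂ ε a₁ b₁ := by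
  have hB1 : (0:ℝ) < B - 1 := by linarith
  -- LHS pieces
  have hT1a2 : T1 Rmax₁ a₂ = 0 := by
    unfold T1
    rcases lt_or_eq_of_le ha₂ with h | h
    · simp [h]
    · subst h; simp
  have hT2b2 : T2 Rmax₂ ε b₂ ≤ 1 := by
    unfold T2
    split_ifs with h1 h2
    · linarith
    · exact hε1
    · rw [div_le_one hR₂]; exact hb₂
  have hT2b1 : 0 ≤ T2 Rmax₂ ε b₁ := by
    unfold T2
    split_ifs with h1 h2
    · exact le_refl 0
    · exact hε.le
    · positivity
  have hT1a1 : 0 < (B - 1) * T1 Rmax₁ a₁ := by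
    unfold T1
    rw [if_neg (not_lt.2 ha₁.le)]
    positivity
  have hceil : (1:ℤ) ≤ ⌈(B - 1) * T1 Rmax₁ a₁⌉ := by
    exact Int.one_le_ceil_iff.2 hT1a1
  have hceilR : (1:ℝ) ≤ (⌈(B - 1) * T1 Rmax₁ a₁⌉ : ℝ) := by exact_mod_cast hceil
  unfold GCFfal
  rw [hT1a2]
  simp only [mul_zero, Int.ceil_zero, Int.cast_zero]
  have h1 : (B - 1) * T2 Rmax₂ ε b₂ ≤ B - 1 := by nlinarith
  have h2 : B ≤ B * (⌈(B - 1) * T1 Rmax₁ a₁⌉ : ℝ) := by nlinarith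
  nlinarith [mul_nonneg hB1.le hT2b1]
end

section
/- Soundness of the partially simulation-free fitness function GCF_fal_sf: if GCF_fal_sf(u) = 0 then f₁(u) ≤ 0 and f₂(u) < 0, i.e., the input constraints are satisfied and the specification is falsified. -/
/-- The partially simulation-free lexicographic fitness function `GCF_fal_sf`. -/
noncomputable def GCFfalSf (B Rmax₁ Rmax₂ ε : ℝ) (a b : ℝ) : ℝ :=
  if 0 < a then B * (⌈(B - 1) * T1 Rmax₁ a⌉ : ℝ) else (B - 1) * T2 Rmax₂ ε b

theorem GCFfalSf_sound (B Rmax₁ Rmax₂ ε : ℝ) (hB : 1 < B)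
    (hR₁ : 0 < Rmax₁) (hR₂ : 0 < Rmax₂) (hε : 0 < ε) (a b : ℝ)
    (h : GCFfalSf B Rmax₁ Rmax₂ ε a b = 0) : a ≤ 0 ∧ b < 0 := by
  unfold GCFfalSf at h
  by_cases ha : 0 < a
  · exfalso
    rw [if_pos ha] at h
    have hT : T1 Rmax₁ a = a / Rmax₁ := by
      unfold T1; rw [if_neg (not_lt.mpr ha.le)]
    have hpos : 0 < (B - 1) * T1 Rmax₁ a := by
      rw [hT]
      have : 0 < a / Rmax₁ := div_pos ha hR₁
      nlinarith
    have hceil : (1 : ℤ) ≤ ⌈(B - 1) * T1 Rmax₁ a⌉ := Int.one_le_ceil_iff.mpr hpos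
    have : 0 < B * (⌈(B - 1) * T1 Rmax₁ a⌉ : ℝ) := by
      have : (1 : ℝ) ≤ (⌈(B - 1) * T1 Rmax₁ a⌉ : ℝ) := by exact_mod_cast hceil
      nlinarith
    linarith [h ▸ this]
  · rw [if_neg ha] at h
    refine ⟨not_lt.mp ha, ?_⟩
    have hB1 : B - 1 ≠ 0 := by linarith
    have hT : T2 Rmax₂ ε b = 0 := by
      rcases mul_eq_zero.mp h with h' | h'
      · exact absurd h' hB1
      · exact h'
    unfold T2 at hT
    by_contra hb
    push_neg at hb
    rw [if_neg (not_lt.mpr hb)] at hT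
    rcases eq_or_lt_of_le hb with hb0 | hb0
    · rw [if_pos hb0.symm] at hT; linarith
    · rw [if_neg (ne_of_gt hb0)] at hT
      have : b / Rmax₂ > 0 := by positivity
      linarith
end

section
/- The partially simulation-free fitness function still preserves prioritization: for any a₁ > 0 with a₁ ≤ Rmax₁ and any a₂ ≤ 0, b₂ ≤ Rmax₂, GCF_fal_sf(a₁, b₁) > GCF_fal_sf(a₂, b₂). -/
theorem GCFfalSf_prioritization (B Rmax₁ Rmax₂ ε : ℝ) (hB : 2 ≤ B)
    (hR₁ : 0 < Rmax₁) (hR₂ : 0 < Rmax₂) (hε : 0 < ε) (hε1 : ε ≤ 1)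
    (a₁ b₁ a₂ b₂ : ℝ) (ha₁ : 0 < a₁) (ha₁' : a₁ ≤ Rmax₁)
    (ha₂ : a₂ ≤ 0) (hb₂ : b₂ ≤ Rmax₂) :
    GCFfalSf B Rmax₁ Rmax₂ ε a₂ b₂ < GCFfalSf B Rmax₁ Rmax₂ ε a₁ b₁ := by
  have hB1 : (0:ℝ) < B - 1 := by linarith
  have hT2 : T2 Rmax₂ ε b₂ ≤ 1 := by
    unfold T2
    split_ifs with h1 h2
    · norm_num
    · exact hε1
    · rw [div_le_one hR₂]; exact hb₂
  have hLHS : GCFfalSf B Rmax₁ Rmax₂ ε a₂ b₂ ≤ B - 1 := by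
    unfold GCFfalSf
    rw [if_neg (by linarith : ¬ 0 < a₂)]
    calc (B - 1) * T2 Rmax₂ ε b₂ ≤ (B - 1) * 1 := by
          exact mul_le_mul_of_nonneg_left hT2 hB1.le
      _ = B - 1 := by ring
  have hT1 : 0 < T1 Rmax₁ a₁ := by
    unfold T1
    rw [if_neg (by linarith : ¬ a₁ < 0)]
    positivity
  have hceil : (1:ℤ) ≤ ⌈(B - 1) * T1 Rmax₁ a₁⌉ := by
    apply Int.one_le_ceil_iff.mpr
    positivity
  have hRHS : B ≤ GCFfalSf B Rmax₁ Rmax₂ ε a₁ b₁ := by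
    unfold GCFfalSf
    rw [if_pos ha₁]
    have : (1:ℝ) ≤ (⌈(B - 1) * T1 Rmax₁ a₁⌉ : ℝ) := by exact_mod_cast hceil
    nlinarith
  linarith
end

section
/- Monotonicity of robust semantics refines Boolean semantics for atomic formulas and Boolean connectives: if the robust semantics of a formula φ built from atomic propositions, ¬, ∧, ∨ on signal w is strictly positive, then w Boolean-satisfies φ; if strictly negative, then w does not satisfy φ. (Boolean satisfaction defined by: w ⊨ f(x⃗)>0 iff f(w(0)(x⃗)) > 0; w ⊨ ¬φ iff not w ⊨ φ; standard clauses for ∧, ∨; and never w ⊨ ⊥.) -/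
/-- Propositional fragment of STL: atoms `f(x⃗) > 0`, `⊥`, `¬`, `∧`, `∨`. -/
inductive PropSTL (n : ℕ) : Type
  | atom : ((Fin n → ℝ) → ℝ) → PropSTL n
  | bot  : PropSTL n
  | neg  : PropSTL n → PropSTL n
  | and  : PropSTL n → PropSTL n → PropSTL n
  | or   : PropSTL n → PropSTL n → PropSTL n

/-- Robust semantics in `EReal`. -/
noncomputable def robust {n : ℕ} (w : ℝ → Fin n → ℝ) : PropSTL n → EReal
  | .atom f => (f (w 0) : EReal)
  | .bot => ⊥
  | .neg φ => - robust w φ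
  | .and φ ψ => min (robust w φ) (robust w ψ)
  | .or φ ψ => max (robust w φ) (robust w ψ)

/-- Boolean satisfaction. -/
def sat {n : ℕ} (w : ℝ → Fin n → ℝ) : PropSTL n → Prop
  | .atom f => 0 < f (w 0)
  | .bot => False
  | .neg φ => ¬ sat w φ
  | .and φ ψ => sat w φ ∧ sat w ψ
  | .or φ ψ => sat w φ ∨ sat w ψ

theorem robust_refines_boolean {n : ℕ} (w : ℝ → Fin n → ℝ) (φ : PropSTL n) :
    (0 < robust w φ → sat w φ) ∧ (robust w φ < 0 → ¬ sat w φ) := by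
  induction φ with
  | atom f =>
    constructor
    · intro h
      simp only [robust] at h
      exact_mod_cast h
    · intro h hs
      simp only [robust] at h
      simp only [sat] at hs
      exact absurd (by exact_mod_cast hs : (0:EReal) < f (w 0)) (not_lt.2 h.le)
  | bot => exact ⟨fun h => absurd h (by simp [robust]), fun _ => id⟩
  | neg φ ih =>
    constructor
    · intro h hs
      have : robust w φ < 0 := by
        simp only [robust] at h
        have h2 : -(0:EReal) < -(robust w φ) := by simpa using h
        simpa using EReal.neg_lt_neg_iff.mp h2
      exact ih.2 this hs
    · intro h hs
      have : 0 < robust w φ := by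
        simp only [robust] at h
        have h2 : -(robust w φ) < -(0:EReal) := by simpa using h
        simpa using EReal.neg_lt_neg_iff.mp h2
      exact hs (ih.1 this)
  | and φ ψ ihφ ihψ =>
    constructor
    · intro h
      simp only [robust, lt_min_iff] at h
      exact ⟨ihφ.1 h.1, ihψ.1 h.2⟩
    · intro h hs
      simp only [robust, min_lt_iff] at h
      rcases h with h | h
      · exact ihφ.2 h hs.1
      · exact ihψ.2 h hs.2
  | or φ ψ ihφ ihψ =>
    constructor
    · intro h
      simp only [robust, lt_max_iff] at h
      rcases h with h | h
      · exact Or.inl (ihφ.1 h)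
      · exact Or.inr (ihψ.1 h)
    · intro h hs
      simp only [robust, max_lt_iff] at h
      rcases hs with hs | hs
      · exact ihφ.2 h.1 hs
      · exact ihψ.2 h.2 hs
end
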